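/- Let U ≥ 1 users have channel gains H_1 ≥ H_2 ≥ … ≥ H_U > 0, let b > 0 be a common per-user bandwidth, let ρ ≥ 0 and r ≥ ρ be rates, let P > 0 be the total power budget, and let N₀ > 0, γ ∈ (0,1]. Define the minimal power m(H, s) = N₀·b·(2^{s/b} − 1)/(γ·H), and call a subset S ⊆ {1, …, U} feasible if ∑_{k∈S} m(H_k, r) + ∑_{k∉S} m(H_k, ρ) ≤ P. Then for every feasible subset S, the prefix {1, …, |S|} (the |S| users of highest channel gain) is also feasible. Consequently, the maximum cardinality of a feasible subset is attained by a prefix of the users ordered by decreasing channel gain. -/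

import Mathlib

/-!
The power spent on a set `S` of upgraded users is `∑ₖ m(Hₖ, ρ) + ∑_{k ∈ S} cₖ` with
the upgrade cost `cₖ = m(Hₖ, r) − m(Hₖ, ρ)`, so feasibility only depends on `∑_{k ∈ S} cₖ`.
The cost is nondecreasing along the users sorted by decreasing gain, and the prefix `P` with
`|P| = |S|` trades the users of `S \ P` for the equally many users of `P \ S`, each of which
precedes, hence costs at most, every one of them.
-/

/-- The minimal transmit power for a user with channel gain `H` and bandwidth `b`
to achieve rate `s`: `m(H, s) = N₀·b·(2^{s/b} − 1)/(γ·H)`. -/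
noncomputable def minPower (N0 γ b H s : ℝ) : ℝ :=
  N0 * b * ((2 : ℝ) ^ (s / b) - 1) / (γ * H)

open Finset

section Exchange

variable {ι M : Type*} [AddCommMonoid M] [LinearOrder M] [IsOrderedAddMonoid M]

theorem Finset.sum_le_sum_of_card_eq_of_forall_le {s t : Finset ι} {f : ι → M}
    (hst : #s = #t) (h : ∀ i ∈ s, ∀ j ∈ t, f i ≤ f j) :
    ∑ i ∈ s, f i ≤ ∑ j ∈ t, f j := by
  rcases s.eq_empty_or_nonempty with rfl | hs
  · rw [card_empty, eq_comm, card_eq_zero] at hst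
    simp [hst]
  obtain ⟨i₀, hi₀, hmax⟩ := s.exists_max_image f hs
  calc ∑ i ∈ s, f i ≤ #s • f i₀ := sum_le_card_nsmul _ _ _ hmax
    _ = #t • f i₀ := by rw [hst]
    _ ≤ ∑ j ∈ t, f j := card_nsmul_le_sum _ _ _ fun j hj ↦ h i₀ hi₀ j hj

theorem Fin.card_filter_val_lt_card {n : ℕ} (s : Finset (Fin n)) :
    #(univ.filter fun i : Fin n ↦ (i : ℕ) < #s) = #s := by
  rw [card_filter_val_lt]
  exact min_eq_right (by simpa using s.card_le_univ)

theorem Fin.sum_filter_val_lt_card_le {n : ℕ} {f : Fin n → M} (hf : Monotone f)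
    (s : Finset (Fin n)) :
    ∑ i ∈ (univ.filter fun i : Fin n ↦ (i : ℕ) < #s), f i ≤ ∑ i ∈ s, f i := by
  set p : Finset (Fin n) := (univ.filter fun i : Fin n ↦ (i : ℕ) < #s)
  have hexchange : ∑ i ∈ p \ s, f i ≤ ∑ j ∈ s \ p, f j := by
    refine sum_le_sum_of_card_eq_of_forall_le
      (card_sdiff_comm (Fin.card_filter_val_lt_card s)) fun i hi j hj ↦ hf ?_
    simp only [p, mem_sdiff, mem_filter, mem_univ, true_and] at hi hj
    exact Fin.le_def.mpr (by omega)
  rw [← sum_inter_add_sum_sdiff p s, ← sum_inter_add_sum_sdiff s p, inter_comm]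
  exact add_le_add_right hexchange _

end Exchange

theorem Finset.sum_add_sum_compl_le_of_sum_sub_le {ι M : Type*} [Fintype ι] [DecidableEq ι]
    [AddCommGroup M] [PartialOrder M] [IsOrderedAddMonoid M] {f g : ι → M} {s t : Finset ι}
    (h : ∑ i ∈ s, (f i - g i) ≤ ∑ i ∈ t, (f i - g i)) :
    ∑ i ∈ s, f i + ∑ i ∈ sᶜ, g i ≤ ∑ i ∈ t, f i + ∑ i ∈ tᶜ, g i := by
  have key (u : Finset ι) :
      ∑ i ∈ u, f i + ∑ i ∈ uᶜ, g i = ∑ i ∈ u, (f i - g i) + ∑ i, g i := by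
    rw [sum_sub_distrib, ← sum_add_sum_compl u g]
    abel
  rw [key, key]
  exact add_le_add_left h _

theorem Fin.exists_prefix_forall_card_le {n : ℕ} (p : Finset (Fin n) → Prop)
    (hp : ∀ s, p s → p (univ.filter fun i : Fin n ↦ (i : ℕ) < #s)) {s : Finset (Fin n)}
    (hs : p s) :
    ∃ t, p t ∧ t = (univ.filter fun i : Fin n ↦ (i : ℕ) < #t) ∧
      ∀ s', p s' → #s' ≤ #t := by
  classical
  obtain ⟨m, hm, hmax⟩ := ({s | p s} : Finset (Finset (Fin n))).exists_max_image card
    ⟨s, by simpa using hs⟩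
  simp only [mem_filter, mem_univ, true_and] at hm hmax
  refine ⟨_, hp m hm, by rw [Fin.card_filter_val_lt_card], fun s' hs' ↦ ?_⟩
  rw [Fin.card_filter_val_lt_card]
  exact hmax s' hs'

theorem minPower_sub_minPower_le {N0 γ b ρ r H H' : ℝ} (hN0 : 0 ≤ N0) (hb : 0 ≤ b)
    (hγ : 0 < γ) (hρr : ρ ≤ r) (hH : 0 < H) (hHH' : H ≤ H') :
    minPower N0 γ b H' r - minPower N0 γ b H' ρ ≤
      minPower N0 γ b H r - minPower N0 γ b H ρ := by
  have hcost (G : ℝ) : minPower N0 γ b G r - minPower N0 γ b G ρ =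
      N0 * b * ((2 : ℝ) ^ (r / b) - (2 : ℝ) ^ (ρ / b)) / (γ * G) := by
    unfold minPower
    rw [← sub_div]
    ring
  have hnum : 0 ≤ N0 * b * ((2 : ℝ) ^ (r / b) - (2 : ℝ) ^ (ρ / b)) := by
    have : (2 : ℝ) ^ (ρ / b) ≤ (2 : ℝ) ^ (r / b) :=
      Real.rpow_le_rpow_of_exponent_le one_le_two (div_le_div_of_nonneg_right hρr hb)
    exact mul_nonneg (mul_nonneg hN0 hb) (sub_nonneg.mpr this)
  rw [hcost, hcost]
  gcongr

theorem prefix_feasible_and_optimal_general (U : ℕ) (H : Fin U → ℝ)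
    (hHpos : ∀ u, 0 < H u) (hHsorted : ∀ u v : Fin U, u ≤ v → H v ≤ H u)
    (b ρ r P N0 γ : ℝ) (hb : 0 < b) (hρr : ρ ≤ r)
    (hN0 : 0 < N0) (hγ : γ ∈ Set.Ioc (0 : ℝ) 1) :
    (∀ S : Finset (Fin U),
      ∑ k ∈ S, minPower N0 γ b (H k) r + ∑ k ∈ Sᶜ, minPower N0 γ b (H k) ρ ≤ P →
      ∑ k ∈ Finset.univ.filter (fun u : Fin U => (u : ℕ) < S.card),
          minPower N0 γ b (H k) r +
        ∑ k ∈ Finset.univ.filter (fun u : Fin U => ¬ (u : ℕ) < S.card),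
          minPower N0 γ b (H k) ρ ≤ P) ∧
    (∀ S : Finset (Fin U),
      ∑ k ∈ S, minPower N0 γ b (H k) r + ∑ k ∈ Sᶜ, minPower N0 γ b (H k) ρ ≤ P →
      ∃ T : Finset (Fin U),
        (∑ k ∈ T, minPower N0 γ b (H k) r + ∑ k ∈ Tᶜ, minPower N0 γ b (H k) ρ ≤ P) ∧
        T = Finset.univ.filter (fun u : Fin U => (u : ℕ) < T.card) ∧
        ∀ S' : Finset (Fin U),
          (∑ k ∈ S', minPower N0 γ b (H k) r + ∑ k ∈ S'ᶜ, minPower N0 γ b (H k) ρ ≤ P) →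
          S'.card ≤ T.card) := by
  have hcost : Monotone fun k ↦ minPower N0 γ b (H k) r - minPower N0 γ b (H k) ρ :=
    fun u v huv ↦
      minPower_sub_minPower_le hN0.le hb.le hγ.1 hρr (hHpos v) (hHsorted u v huv)
  have hprefix (S : Finset (Fin U))
      (hS : ∑ k ∈ S, minPower N0 γ b (H k) r + ∑ k ∈ Sᶜ, minPower N0 γ b (H k) ρ ≤ P) :
      ∑ k ∈ (univ.filter fun u : Fin U ↦ (u : ℕ) < #S), minPower N0 γ b (H k) r
        + ∑ k ∈ (univ.filter fun u : Fin U ↦ (u : ℕ) < #S)ᶜ, minPower N0 γ b (H k) ρ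
        ≤ P :=
    (sum_add_sum_compl_le_of_sum_sub_le (Fin.sum_filter_val_lt_card_le hcost S)).trans hS
  refine ⟨fun S hS ↦ ?_, fun S hS ↦ Fin.exists_prefix_forall_card_le _ hprefix hS⟩
  rw [← compl_filter]
  exact hprefix S hS

/-- power-allocation form of Lemma 1: with users ordered by
decreasing channel gain, for every feasible set `S` of users upgraded from rate `ρ`
to rate `r`, the prefix consisting of the `|S|` highest-gain users is also feasible;
consequently the maximum cardinality of a feasible set is attained by a prefix. -/
theorem prefix_feasible_and_optimal (U : ℕ) (hU : 1 ≤ U) (H : Fin U → ℝ)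
    (hHpos : ∀ u, 0 < H u) (hHsorted : ∀ u v : Fin U, u ≤ v → H v ≤ H u)
    (b ρ r P N0 γ : ℝ) (hb : 0 < b) (hρ : 0 ≤ ρ) (hρr : ρ ≤ r) (hP : 0 < P)
    (hN0 : 0 < N0) (hγ : γ ∈ Set.Ioc (0 : ℝ) 1) :
    (∀ S : Finset (Fin U),
      ∑ k ∈ S, minPower N0 γ b (H k) r + ∑ k ∈ Sᶜ, minPower N0 γ b (H k) ρ ≤ P →
      ∑ k ∈ Finset.univ.filter (fun u : Fin U => (u : ℕ) < S.card),
          minPower N0 γ b (H k) r +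
        ∑ k ∈ Finset.univ.filter (fun u : Fin U => ¬ (u : ℕ) < S.card),
          minPower N0 γ b (H k) ρ ≤ P) ∧
    (∀ S : Finset (Fin U),
      ∑ k ∈ S, minPower N0 γ b (H k) r + ∑ k ∈ Sᶜ, minPower N0 γ b (H k) ρ ≤ P →
      ∃ T : Finset (Fin U),
        (∑ k ∈ T, minPower N0 γ b (H k) r + ∑ k ∈ Tᶜ, minPower N0 γ b (H k) ρ ≤ P) ∧
        T = Finset.univ.filter (fun u : Fin U => (u : ℕ) < T.card) ∧
        ∀ S' : Finset (Fin U),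
          (∑ k ∈ S', minPower N0 γ b (H k) r + ∑ k ∈ S'ᶜ, minPower N0 γ b (H k) ρ ≤ P) →
          S'.card ≤ T.card) :=
  prefix_feasible_and_optimal_general U H hHpos hHsorted b ρ r P N0 γ hb hρr hN0 hγ
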